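/- Let A ⊆ B(X) be an abelian, unital, strongly closed subalgebra of split strict multiplicity p, identified with the algebra {T_a : a ∈ A} acting on X = ⊕ⱼ A/Iⱼ. For every T ∈ algLat(A) there exists a₀ ∈ A such that (T − T_{a₀})(x) ∈ ⊕ⱼ Rⱼ for every x ∈ X, where Rⱼ is the radical of A/Iⱼ (the intersection of all maximal ideals of A/Iⱼ, viewed as a subspace of A/Iⱼ). -/

import Mathlib

/-!
Approximate `T (∑ⱼ xⱼ)` by `bₙ (∑ⱼ xⱼ)` with `bₙ ∈ A`. Since `X = ⊕ⱼ A xⱼ` is a topological direct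
sum (open mapping theorem), `bₙ xⱼ → T xⱼ` for every `j`; as `A` is commutative, `bₙ` then converges
pointwise on all of `X`, and its strong limit `a₀ ∈ A` agrees with `T` on every `xⱼ`. For
`y = ∑ⱼ fⱼ xⱼ` this leaves `T y - a₀ y = ∑ⱼ (T (fⱼ xⱼ) - fⱼ (T xⱼ))`.

Given a maximal ideal `M ⊇ Iⱼ`, Gelfand–Mazur writes `fⱼ = h + μ` with `h ∈ M`. The subspace
`M xⱼ` is closed: `M` is closed and, as `Iⱼ ⊆ M`, saturated for the map `a ↦ a xⱼ`, which is open
onto the closed subspace `A xⱼ`. Being also `A`-invariant and containing `h xⱼ`, it contains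
`T (h xⱼ)`, and hence `T (fⱼ xⱼ) - fⱼ (T xⱼ) = T (h xⱼ) - h (T xⱼ) ∈ M xⱼ`.
-/
set_option synthInstance.maxHeartbeats 1000000
set_option maxHeartbeats 1000000

/-- The annihilator ideal `Iⱼ = {a ∈ A : a xⱼ = 0}` of a vector. -/
def annIdeal {X : Type*} [NormedAddCommGroup X] [NormedSpace ℂ X]
    (A : Subalgebra ℂ (X →L[ℂ] X)) (x : X) : Ideal ↥A where
  carrier := {a | (a : X →L[ℂ] X) x = 0}
  add_mem' := fun {a b} ha hb => by
    simp only [Set.mem_setOf_eq] at *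
    rw [Subalgebra.coe_add, ContinuousLinearMap.add_apply, ha, hb, add_zero]
  zero_mem' := by simp
  smul_mem' := fun c a ha => by
    simp only [Set.mem_setOf_eq, smul_eq_mul] at *
    rw [Subalgebra.coe_mul, ContinuousLinearMap.mul_apply, ha, map_zero]

/-- `c ∈ A` maps into the radical of `A/Iⱼ`, i.e. `c` lies in every maximal ideal
of `A` containing `Iⱼ`. -/
def inRadical {X : Type*} [NormedAddCommGroup X] [NormedSpace ℂ X]
    (A : Subalgebra ℂ (X →L[ℂ] X)) (x : X) (c : ↥A) : Prop :=
  ∀ M : Ideal ↥A, M.IsMaximal → annIdeal A x ≤ M → c ∈ M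

open Filter Topology

theorem Ideal.exists_sub_algebraMap_mem {𝔸 : Type*} [NormedCommRing 𝔸] [NormedAlgebra ℂ 𝔸]
    [CompleteSpace 𝔸] (M : Ideal 𝔸) [hM : M.IsMaximal] (a : 𝔸) :
    ∃ μ : ℂ, a - algebraMap ℂ 𝔸 μ ∈ M := by
  let χ : 𝔸 →ₐ[ℂ] ℂ := WeakDual.CharacterSpace.equivAlgHom M.toCharacterSpace
  have hker : M = RingHom.ker χ :=
    hM.eq_of_le (RingHom.ker_ne_top _) fun b hb => M.toCharacterSpace_apply_eq_zero_of_mem hb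
  refine ⟨χ a, ?_⟩
  rw [hker, RingHom.mem_ker]
  simp

theorem Subalgebra.exists_sub_algebraMap_mem {E : Type*} [NormedRing E] [NormedAlgebra ℂ E]
    [CompleteSpace E] (A : Subalgebra ℂ E) (hA : IsClosed (A : Set E))
    (hcomm : ∀ a ∈ A, ∀ b ∈ A, a * b = b * a) (M : Ideal A) [M.IsMaximal] (a : A) :
    ∃ μ : ℂ, a - algebraMap ℂ A μ ∈ M := by
  let _ : NormedCommRing A :=
    { mul_comm := fun a b => Subtype.ext (hcomm a a.2 b b.2) }
  have : CompleteSpace A := hA.completeSpace_coe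
  exact M.exists_sub_algebraMap_mem a

theorem ContinuousLinearMap.isClosed_image_of_ker_le {𝕜 E F : Type*}
    [NontriviallyNormedField 𝕜] [NormedAddCommGroup E] [NormedSpace 𝕜 E] [CompleteSpace E]
    [NormedAddCommGroup F] [NormedSpace 𝕜 F] [CompleteSpace F]
    (q : E →L[𝕜] F) (hq : IsClosed (q.range : Set F)) {M : Submodule 𝕜 E}
    (hM : IsClosed (M : Set E)) (hle : q.ker ≤ M) : IsClosed (q '' M) := by
  have : CompleteSpace q.range := hq.completeSpace_coe
  let q' : E →L[𝕜] q.range := q.codRestrict q.range fun a => ⟨a, rfl⟩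
  have hq' : Function.Surjective q' := by
    rintro ⟨_, a, rfl⟩
    exact ⟨a, rfl⟩
  have hsat : q' ⁻¹' (q' '' M) = M := by
    refine Set.Subset.antisymm ?_ (Set.subset_preimage_image _ _)
    rintro b ⟨a, ha, hab⟩
    have hba : q b = q a := congrArg Subtype.val hab.symm
    have : b - a ∈ M := hle (by simp [hba])
    simpa using M.add_mem this ha
  have hclosed : IsClosed (q' '' M) := by
    rw [← ((q'.isOpenMap hq').isQuotientMap q'.continuous hq').isClosed_preimage, hsat]
    exact hM
  have himage : q '' M = Subtype.val '' (q' '' M) := by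
    rw [Set.image_image]; rfl
  rw [himage]
  exact hq.isClosedEmbedding_subtypeVal.isClosedMap _ hclosed

theorem Submodule.tendsto_pi_of_tendsto_sum {ι 𝕜 E α : Type*} [Fintype ι]
    [NontriviallyNormedField 𝕜] [NormedAddCommGroup E] [NormedSpace 𝕜 E] [CompleteSpace E] (S : ι → Submodule 𝕜 E)
    (hS : ∀ i, IsClosed (S i : Set E)) (hinj : ∀ v : ∀ i, S i, ∑ i, (v i : E) = 0 → v = 0)
    (hsurj : ∀ y, ∃ v : ∀ i, S i, ∑ i, (v i : E) = y) {l : Filter α} {u : α → ∀ i, S i}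
    {v : ∀ i, S i} (h : Tendsto (fun n => ∑ i, (u n i : E)) l (𝓝 (∑ i, (v i : E)))) :
    Tendsto u l (𝓝 v) := by
  have _ : ∀ i, CompleteSpace (S i) := fun i => (hS i).completeSpace_coe
  let Φ : (∀ i, S i) →L[𝕜] E := ∑ i, (S i).subtypeL.comp (ContinuousLinearMap.proj i)
  have hΦ : ∀ w, Φ w = ∑ i, (w i : E) := fun w => by simp [Φ]
  have hker : Φ.ker = ⊥ := by
    rw [Submodule.eq_bot_iff]
    intro w hw
    exact hinj w (by rwa [← hΦ])
  have hrange : Φ.range = ⊤ := by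
    rw [LinearMap.range_eq_top]
    intro y
    obtain ⟨w, rfl⟩ := hsurj y
    exact ⟨w, hΦ w⟩
  let e := ContinuousLinearEquiv.ofBijective Φ hker hrange
  have he : ∀ w, e.symm (∑ i, (w i : E)) = w := fun w => by
    rw [← hΦ]; exact ContinuousLinearEquiv.ofBijective_symm_apply_apply Φ hker hrange w
  have := (e.symm.continuous.tendsto _).comp h
  simpa only [Function.comp_def, he] using this

namespace Subalgebra

variable {X : Type*} [NormedAddCommGroup X] [NormedSpace ℂ X] (A : Subalgebra ℂ (X →L[ℂ] X))

noncomputable def orbitMap (w : X) : A →L[ℂ] X :=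
  (ContinuousLinearMap.apply ℂ X w).comp (Subalgebra.toSubmodule A).subtypeL

noncomputable def orbit (w : X) : Submodule ℂ X := (A.orbitMap w).range

/-- `X → X` carries the topology of pointwise convergence, so this is closedness in the strong
operator topology. -/
def IsStronglyClosed : Prop :=
  ∀ T : X →L[ℂ] X,
    (T : X → X) ∈ closure ((fun a : X →L[ℂ] X => (a : X → X)) '' (A : Set (X →L[ℂ] X))) → T ∈ A

def algLat : Set (X →L[ℂ] X) :=
  {T | ∀ K : Submodule ℂ X, IsClosed (K : Set X) → (∀ a ∈ A, ∀ y ∈ K, a y ∈ K) → ∀ y ∈ K, T y ∈ K}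

variable {A}

@[simp]
theorem orbitMap_apply (w : X) (a : A) : A.orbitMap w a = (a : X →L[ℂ] X) w := rfl

theorem mem_orbit {w y : X} : y ∈ A.orbit w ↔ ∃ a : A, (a : X →L[ℂ] X) w = y := Iff.rfl

theorem coe_orbit (w : X) : (A.orbit w : Set X) = {y | ∃ a ∈ A, a w = y} := by
  ext y
  simp [mem_orbit]

theorem self_mem_orbit (w : X) : w ∈ A.orbit w := ⟨1, rfl⟩

theorem apply_mem_orbit {a : X →L[ℂ] X} (ha : a ∈ A) {w y : X} (hy : y ∈ A.orbit w) :
    a y ∈ A.orbit w := by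
  obtain ⟨b, rfl⟩ := hy
  exact ⟨⟨a, ha⟩ * b, rfl⟩

theorem IsStronglyClosed.isClosed (hA : A.IsStronglyClosed) : IsClosed (A : Set (X →L[ℂ] X)) := by
  have hcont : Continuous fun a : X →L[ℂ] X => (a : X → X) :=
    continuous_pi fun y => (ContinuousLinearMap.apply ℂ X y).continuous
  exact isClosed_of_closure_subset fun T hT =>
    hA T (map_mem_closure hcont hT fun a ha => Set.mem_image_of_mem _ ha)

theorem apply_mem_closure_orbit {T : X →L[ℂ] X} (hT : T ∈ A.algLat) (w : X) :
    T w ∈ closure (A.orbit w : Set X) := by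
  rw [← Submodule.topologicalClosure_coe]
  refine hT _ (Submodule.isClosed_topologicalClosure _) (fun a ha y hy => ?_) w
    (Submodule.le_topologicalClosure _ (self_mem_orbit w))
  rw [← SetLike.mem_coe, Submodule.topologicalClosure_coe] at hy ⊢
  exact map_mem_closure a.continuous hy fun z hz => apply_mem_orbit ha hz

theorem apply_mem_orbit_of_mem_algLat {T : X →L[ℂ] X} (hT : T ∈ A.algLat) {w y : X}
    (hw : IsClosed (A.orbit w : Set X)) (hy : y ∈ A.orbit w) : T y ∈ A.orbit w :=
  hT _ hw (fun _ ha _ => apply_mem_orbit ha) y hy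

theorem exists_tendsto_apply_of_tendsto_apply_generators (hcomm : ∀ a ∈ A, ∀ b ∈ A, a * b = b * a)
    {ι : Type*} [Fintype ι] {x : ι → X}
    (hspan : ∀ y : X, ∃ f : ι → (X →L[ℂ] X), (∀ j, f j ∈ A) ∧ y = ∑ j, f j (x j))
    {α : Type*} {l : Filter α} {b : α → X →L[ℂ] X} (hb : ∀ n, b n ∈ A) {z : ι → X}
    (h : ∀ j, Tendsto (fun n => b n (x j)) l (𝓝 (z j))) (y : X) :
    ∃ z, Tendsto (fun n => b n y) l (𝓝 z) := by
  obtain ⟨f, hf, rfl⟩ := hspan y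
  refine ⟨∑ j, f j (z j), ?_⟩
  have hlim := tendsto_finsetSum Finset.univ fun j _ => ((f j).continuous.tendsto _).comp (h j)
  refine hlim.congr fun n => ?_
  simp only [Function.comp_apply, map_sum]
  refine Finset.sum_congr rfl fun j _ => ?_
  exact (DFunLike.congr_fun (hcomm (b n) (hb n) (f j) (hf j)) (x j)).symm

variable [CompleteSpace X]

theorem IsStronglyClosed.exists_tendsto (hA : A.IsStronglyClosed)
    {b : ℕ → X →L[ℂ] X} (hb : ∀ n, b n ∈ A)
    (h : ∀ y, ∃ z, Tendsto (fun n => b n y) atTop (𝓝 z)) :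
    ∃ a ∈ A, ∀ y, Tendsto (fun n => b n y) atTop (𝓝 (a y)) := by
  choose g hg using h
  have hlim : Tendsto (fun n y => b n y) atTop (𝓝 g) := tendsto_pi_nhds.mpr hg
  refine ⟨continuousLinearMapOfTendsto b hlim, hA _ ?_, hg⟩
  exact mem_closure_of_tendsto hlim (Eventually.of_forall fun n => ⟨b n, hb n, rfl⟩)

theorem exists_mem_ideal_apply_eq_sub (hA : IsClosed (A : Set (X →L[ℂ] X)))
    (hcomm : ∀ a ∈ A, ∀ b ∈ A, a * b = b * a) {w : X} (hw : IsClosed (A.orbit w : Set X))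
    {T : X →L[ℂ] X} (hT : T ∈ A.algLat) (M : Ideal A) [M.IsMaximal] (hle : annIdeal A w ≤ M)
    {f : X →L[ℂ] X} (hf : f ∈ A) : ∃ c ∈ M, (c : X →L[ℂ] X) w = T (f w) - f (T w) := by
  have : CompleteSpace A := hA.completeSpace_coe
  obtain ⟨μ, hμ⟩ := A.exists_sub_algebraMap_mem hA hcomm M ⟨f, hf⟩
  set h := (⟨f, hf⟩ : A) - algebraMap ℂ A μ
  have hfh : f = h + μ • 1 := by simp [h, Algebra.algebraMap_eq_smul_one]
  have hMw : IsClosed (A.orbitMap w '' M) :=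
    (A.orbitMap w).isClosed_image_of_ker_le hw (M := M.restrictScalars ℂ)
      (Ideal.IsMaximal.isClosed (I := M)) fun a ha => hle ha
  have horbit : (A.orbit ((h : X →L[ℂ] X) w) : Set X) ⊆ A.orbitMap w '' M := by
    rintro _ ⟨a, rfl⟩
    exact ⟨a * h, M.mul_mem_left a hμ, rfl⟩
  obtain ⟨d, hdM, hd⟩ := closure_minimal horbit hMw (apply_mem_closure_orbit hT _)
  obtain ⟨g, hg⟩ := apply_mem_orbit_of_mem_algLat hT hw (self_mem_orbit w)
  refine ⟨d - g * h, M.sub_mem hdM (M.mul_mem_left g hμ), ?_⟩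
  simp only [ContinuousLinearMap.coe_coe, orbitMap_apply] at hd hg
  have hgh : (g : X →L[ℂ] X) ((h : X →L[ℂ] X) w) = (h : X →L[ℂ] X) ((g : X →L[ℂ] X) w) :=
    DFunLike.congr_fun (hcomm g g.2 h h.2) w
  simp [hfh, ← hd, ← hg, hgh]

theorem exists_inRadical_apply_eq_sub (hA : IsClosed (A : Set (X →L[ℂ] X)))
    (hcomm : ∀ a ∈ A, ∀ b ∈ A, a * b = b * a) {w : X} (hw : IsClosed (A.orbit w : Set X))
    {T : X →L[ℂ] X} (hT : T ∈ A.algLat) {f : X →L[ℂ] X} (hf : f ∈ A) :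
    ∃ c : A, inRadical A w c ∧ (c : X →L[ℂ] X) w = T (f w) - f (T w) := by
  have hTf : T (f w) ∈ A.orbit w :=
    apply_mem_orbit_of_mem_algLat hT hw (apply_mem_orbit hf (self_mem_orbit w))
  have hfT : f (T w) ∈ A.orbit w :=
    apply_mem_orbit hf (apply_mem_orbit_of_mem_algLat hT hw (self_mem_orbit w))
  obtain ⟨c, hc⟩ := (A.orbit w).sub_mem hTf hfT
  refine ⟨c, fun M hM hle => ?_, hc⟩
  obtain ⟨c', hc'M, hc'⟩ := exists_mem_ideal_apply_eq_sub hA hcomm hw hT M hle hf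
  have hcc' : c - c' ∈ M := hle (by simp [annIdeal, ← hc, hc'])
  simpa using M.add_mem hcc' hc'M

theorem tendsto_apply_of_tendsto_apply_sum {ι : Type*} [Fintype ι] {x : ι → X}
    (hc : ∀ j, IsClosed (A.orbit (x j) : Set X))
    (hspan : ∀ y : X, ∃ f : ι → (X →L[ℂ] X), (∀ j, f j ∈ A) ∧ y = ∑ j, f j (x j))
    (hind : ∀ f : ι → (X →L[ℂ] X), (∀ j, f j ∈ A) →
      (∑ j, f j (x j)) = 0 → ∀ j, f j (x j) = 0)
    {α : Type*} {l : Filter α} {b : α → X →L[ℂ] X} (hb : ∀ n, b n ∈ A) {z : ι → X}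
    (hz : ∀ j, z j ∈ A.orbit (x j))
    (h : Tendsto (fun n => b n (∑ j, x j)) l (𝓝 (∑ j, z j))) (j : ι) :
    Tendsto (fun n => b n (x j)) l (𝓝 (z j)) := by
  have hinj : ∀ v : ∀ j, A.orbit (x j), ∑ j, (v j : X) = 0 → v = 0 := by
    intro v hv
    choose a ha using fun j => mem_orbit.mp (v j).2
    have := hind (fun j => a j) (fun j => (a j).2) (by simpa [ha] using hv)
    funext j
    exact Subtype.ext ((ha j).symm.trans (this j))
  have hsurj : ∀ y, ∃ v : ∀ j, A.orbit (x j), ∑ j, (v j : X) = y := by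
    intro y
    obtain ⟨f, hf, rfl⟩ := hspan y
    exact ⟨fun j => ⟨f j (x j), ⟨f j, hf j⟩, rfl⟩, rfl⟩
  have hpi := Submodule.tendsto_pi_of_tendsto_sum _ hc hinj hsurj
    (u := fun n j => ⟨b n (x j), apply_mem_orbit (hb n) (self_mem_orbit _)⟩)
    (v := fun j => ⟨z j, hz j⟩) (by simpa [map_sum] using h)
  exact (continuous_subtype_val.tendsto _).comp (((continuous_apply j).tendsto _).comp hpi)

theorem exists_apply_eq_apply_of_mem_algLat (hA : A.IsStronglyClosed)
    (hcomm : ∀ a ∈ A, ∀ b ∈ A, a * b = b * a) {ι : Type*} [Fintype ι] {x : ι → X}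
    (hc : ∀ j, IsClosed (A.orbit (x j) : Set X))
    (hspan : ∀ y : X, ∃ f : ι → (X →L[ℂ] X), (∀ j, f j ∈ A) ∧ y = ∑ j, f j (x j))
    (hind : ∀ f : ι → (X →L[ℂ] X), (∀ j, f j ∈ A) →
      (∑ j, f j (x j)) = 0 → ∀ j, f j (x j) = 0)
    {T : X →L[ℂ] X} (hT : T ∈ A.algLat) : ∃ a₀ ∈ A, ∀ j, a₀ (x j) = T (x j) := by
  obtain ⟨u, hu, hlim⟩ := mem_closure_iff_seq_limit.mp (apply_mem_closure_orbit hT (∑ j, x j))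
  choose b hb using hu
  have hTx : ∀ j, T (x j) ∈ A.orbit (x j) := fun j =>
    apply_mem_orbit_of_mem_algLat hT (hc j) (self_mem_orbit _)
  have hgen : ∀ j, Tendsto (fun n => (b n : X →L[ℂ] X) (x j)) atTop (𝓝 (T (x j))) :=
    tendsto_apply_of_tendsto_apply_sum hc hspan hind (fun n => (b n).2) hTx
      (by rw [← map_sum]; exact hlim.congr fun n => (hb n).symm)
  obtain ⟨a₀, ha₀, ha₀lim⟩ := hA.exists_tendsto (fun n => (b n).2)
    (exists_tendsto_apply_of_tendsto_apply_generators hcomm hspan (fun n => (b n).2) hgen)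
  exact ⟨a₀, ha₀, fun j => tendsto_nhds_unique (ha₀lim (x j)) (hgen j)⟩

end Subalgebra

/-- Let `A ⊆ B(X)` be an abelian, unital, strongly closed operator algebra of
split strict multiplicity `p`. For every `T ∈ algLat A` there is `a₀ ∈ A` with
`(T - T_{a₀}) x ∈ ⊕ⱼ Rⱼ` for all `x`, where `Rⱼ` is the radical of `A/Iⱼ`;
under the identification `X ≅ ⊕ⱼ A/Iⱼ` this means `T y - a₀ y = ∑ⱼ cⱼ xⱼ` with
`φⱼ(cⱼ) ∈ Rⱼ`. -/
theorem stmt7 {X : Type*} [NormedAddCommGroup X] [NormedSpace ℂ X] [CompleteSpace X]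
    (A : Subalgebra ℂ (X →L[ℂ] X))
    (hSOT : ∀ T : X →L[ℂ] X,
      (T : X → X) ∈ closure ((fun a : X →L[ℂ] X => (a : X → X)) '' (A : Set (X →L[ℂ] X)))
      → T ∈ A)
    (hcomm : ∀ a ∈ A, ∀ b ∈ A, a * b = b * a)
    (p : ℕ) (x : Fin p → X)
    (hc : ∀ j, IsClosed {y : X | ∃ a ∈ A, a (x j) = y})
    (hspan : ∀ y : X, ∃ f : Fin p → (X →L[ℂ] X), (∀ j, f j ∈ A) ∧ y = ∑ j, f j (x j))
    (hind : ∀ f : Fin p → (X →L[ℂ] X), (∀ j, f j ∈ A) →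
      (∑ j, f j (x j)) = 0 → ∀ j, f j (x j) = 0)
    (T : X →L[ℂ] X)
    (hT : ∀ K : Submodule ℂ X, IsClosed (K : Set X) →
      (∀ a ∈ A, ∀ y ∈ K, a y ∈ K) → ∀ y ∈ K, T y ∈ K) :
    ∃ a₀ ∈ A, ∀ y : X, ∃ c : Fin p → ↥A,
      (∀ j, inRadical A (x j) (c j)) ∧
      T y - a₀ y = ∑ j, ((c j : X →L[ℂ] X)) (x j) := by
  have horbit : ∀ j, IsClosed (A.orbit (x j) : Set X) := fun j => by
    rw [Subalgebra.coe_orbit]; exact hc j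
  obtain ⟨a₀, ha₀, ha₀x⟩ :=
    Subalgebra.exists_apply_eq_apply_of_mem_algLat hSOT hcomm horbit hspan hind hT
  refine ⟨a₀, ha₀, fun y => ?_⟩
  obtain ⟨f, hf, rfl⟩ := hspan y
  choose c hc_rad hc_apply using fun j =>
    Subalgebra.exists_inRadical_apply_eq_sub (Subalgebra.IsStronglyClosed.isClosed hSOT) hcomm
      (horbit j) hT (hf j)
  refine ⟨c, hc_rad, ?_⟩
  simp only [map_sum, hc_apply, ← Finset.sum_sub_distrib]
  refine Finset.sum_congr rfl fun j _ => ?_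
  rw [← ha₀x j]
  exact congrArg _ (DFunLike.congr_fun (hcomm a₀ ha₀ (f j) (hf j)) (x j))
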